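/- Suppose a sequence of accepted requests indexed by i satisfies v_i ≥ r_i·Σ_{e∈P_i} λ_e^{(i−1)} and v_i ≥ r_i·d_i where d_i = |P_i|, and edge prices update as λ_e^{(i)} = exp(γ·ω_e^{(i)}/C_e) − 1 with ω_e^{(i)} = ω_e^{(i−1)} + r_i for e ∈ P_i. If additionally r_i ≤ C_e/γ for all edges e, then the total value Σ_i v_i is at least (Σ_e C_e·λ_e^{(N)}) / (2γ(e − 1)). -/

import Mathlib

/-!
Each accepted request `i` raises the capacity-weighted price `C_e λ_e` of every edge on its
path by at most `γ (e - 1) r_i (λ_e + 1)`: this is the chord bound `exp t - 1 ≤ (e - 1) t`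
on `[0, 1]`, applicable because `r_i ≤ C_e / γ`. Summed over the path, the increase is
`γ (e - 1) (r_i Σ_{e ∈ P_i} λ_e + r_i d_i) ≤ 2 γ (e - 1) v_i`, and the weighted prices start
at `0`, so summing over requests telescopes to the claim.
-/

open Real Finset

lemma Real.exp_sub_one_le_mul_of_mem_Icc {t : ℝ} (ht : t ∈ Set.Icc (0 : ℝ) 1) :
    exp t - 1 ≤ (exp 1 - 1) * t := by
  have h := convexOn_exp.2 (Set.mem_univ 0) (Set.mem_univ 1)
    (sub_nonneg.2 ht.2) ht.1 (sub_add_cancel 1 t)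
  simp only [smul_eq_mul, mul_zero, mul_one, zero_add, exp_zero] at h
  linarith

lemma capacity_mul_exp_increment_le {γ C r w : ℝ} (hγ : 0 < γ) (hC : 0 < C) (hr : 0 ≤ r)
    (hrC : r ≤ C / γ) :
    C * (exp (γ * (w + r) / C) - exp (γ * w / C)) ≤ γ * (exp 1 - 1) * r * exp (γ * w / C) := by
  have ht : γ * r / C ∈ Set.Icc (0 : ℝ) 1 :=
    ⟨by positivity, (div_le_one hC).2 (by rwa [le_div_iff₀ hγ, mul_comm] at hrC)⟩
  have hchord := Real.exp_sub_one_le_mul_of_mem_Icc ht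
  calc C * (exp (γ * (w + r) / C) - exp (γ * w / C))
      = C * exp (γ * w / C) * (exp (γ * r / C) - 1) := by
        rw [mul_add, add_div, exp_add]; ring
    _ ≤ C * exp (γ * w / C) * ((exp 1 - 1) * (γ * r / C)) := by gcongr
    _ = γ * (exp 1 - 1) * r * exp (γ * w / C) := by field_simp

lemma sum_fin_sub_eq_sub (f : ℕ → ℝ) (N : ℕ) :
    ∑ i : Fin N, (f (i + 1) - f i) = f N - f 0 := by
  rw [Fin.sum_univ_eq_sum_range (fun i => f (i + 1) - f i), sum_range_sub]

/-- Lemma 3 (algorithm lower bound): total accepted value is at least the final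
total edge prices weighted by capacities, divided by `2γ(e-1)`. -/
theorem stmt_11 {E : Type*} [Fintype E] [DecidableEq E] (N : ℕ) (γ : ℝ) (hγ : 0 < γ)
    (C : E → ℝ) (hC : ∀ e, 0 < C e)
    (r : Fin N → ℝ) (hr : ∀ i, 0 < r i)
    (P : Fin N → Finset E) (v : Fin N → ℝ)
    (ω : ℕ → E → ℝ)
    (hω0 : ∀ e, ω 0 e = 0)
    (hωs : ∀ (i : Fin N) (e : E),
      ω ((i : ℕ) + 1) e = ω i e + (if e ∈ P i then r i else 0))
    (lam : ℕ → E → ℝ)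
    (hlam : ∀ (n : ℕ) (e : E), lam n e = Real.exp (γ * ω n e / C e) - 1)
    (hv1 : ∀ i : Fin N, v i ≥ r i * ∑ e ∈ P i, lam i e)
    (hv2 : ∀ i : Fin N, v i ≥ r i * ((P i).card : ℝ))
    (hrsmall : ∀ (i : Fin N) (e : E), r i ≤ C e / γ) :
    ∑ i, v i ≥ (∑ e, C e * lam N e) / (2 * γ * (Real.exp 1 - 1)) := by
  set c := γ * (exp 1 - 1)
  have hc : 0 < c := mul_pos hγ (sub_pos.2 (one_lt_exp_iff.2 one_pos))
  have hedge : ∀ (i : Fin N) (e : E), e ∈ P i →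
      C e * (lam (i + 1) e - lam i e) ≤ c * r i * (lam i e + 1) := fun i e he => by
    simpa [hlam, hωs, he] using
      capacity_mul_exp_increment_le (w := ω i e) hγ (hC e) (hr i).le (hrsmall i e)
  have hoff : ∀ (i : Fin N) (e : E), e ∉ P i → C e * (lam (i + 1) e - lam i e) = 0 :=
    fun i e he => by simp [hlam, hωs, he]
  have hstep : ∀ i : Fin N, ∑ e, C e * (lam (i + 1) e - lam i e) ≤ 2 * c * v i := fun i =>
    calc ∑ e, C e * (lam (i + 1) e - lam i e)
        = ∑ e ∈ P i, C e * (lam (i + 1) e - lam i e) :=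
          (sum_subset (subset_univ _) fun e _ he => hoff i e he).symm
      _ ≤ ∑ e ∈ P i, c * r i * (lam i e + 1) := sum_le_sum (hedge i)
      _ = c * (r i * ∑ e ∈ P i, lam i e + r i * (P i).card) := by
        simp only [mul_add, mul_one, sum_add_distrib, ← mul_sum, sum_const, nsmul_eq_mul]
        ring
      _ ≤ 2 * c * v i := by nlinarith [hv1 i, hv2 i]
  have htotal : ∑ e, C e * lam N e ≤ 2 * c * ∑ i, v i :=
    calc ∑ e, C e * lam N e = ∑ e, ∑ i : Fin N, C e * (lam (i + 1) e - lam i e) := by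
          refine sum_congr rfl fun e _ => ?_
          rw [← mul_sum, sum_fin_sub_eq_sub (lam · e), hlam 0, hω0]
          simp
      _ = ∑ i : Fin N, ∑ e, C e * (lam (i + 1) e - lam i e) := sum_comm
      _ ≤ ∑ i, 2 * c * v i := sum_le_sum fun i _ => hstep i
      _ = 2 * c * ∑ i, v i := (mul_sum _ _ _).symm
  rw [ge_iff_le, mul_assoc 2 γ, div_le_iff₀ (mul_pos two_pos hc), mul_comm]
  exact htotal
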